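/- arXiv:0712.2696 — 2 statements merged into one kernel-verified Lean document; each statement's English description precedes it below -/
import Mathlib

section
/- Let E be an elliptic curve over ℚ given by a Weierstrass equation with integer coefficients, let P ∈ E(ℚ) be an affine point, and let k ≥ 1 be an integer such that k•P is also affine. Then den(x(P)) divides den(x(k•P)); equivalently, v_p(den(x(P))) ≤ v_p(den(x(k•P))) for every prime p. (This is the instance σ = [k] of the isogeny lemma: for an isogeny σ with source a minimal curve, v(B_P) ≤ v(B_{σ(P)}) at every finite place v.) -/
/-- The elliptic curve over `ℚ` given by a Weierstrass equation
`y² + a₁xy + a₃y = x³ + a₂x² + a₄x + a₆` with integer coefficients. -/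
noncomputable def curveQ (a₁ a₂ a₃ a₄ a₆ : ℤ) : WeierstrassCurve.Affine ℚ :=
  { a₁ := (a₁ : ℚ), a₂ := (a₂ : ℚ), a₃ := (a₃ : ℚ), a₄ := (a₄ : ℚ), a₆ := (a₆ : ℚ) }

/-- The x-coordinate of a point (with junk value `0` at the point at infinity). -/
noncomputable def xCoord {F : Type} [Field F] {W : WeierstrassCurve.Affine F} :
    W.Point → F
  | .zero => 0
  | @WeierstrassCurve.Affine.Point.some _ _ _ x _ _ => x

/-- The y-coordinate of a point (with junk value `0` at the point at infinity). -/
noncomputable def yCoord {F : Type} [Field F] {W : WeierstrassCurve.Affine F} :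
    W.Point → F
  | .zero => 0
  | @WeierstrassCurve.Affine.Point.some _ _ _ _ y _ => y

/-!
Work at a nonarchimedean absolute value `v` at which the Weierstrass coefficients are integral, in
Silverman's coordinates `z = -x/y`, `w = -1/y` around the point at infinity, where the curve reads
`w = f(z, w) = z³ + a₁zw + a₂z²w + a₃w² + a₄zw² + a₆w³`. If `v x > 1` then `(v y)² = (v x)³`,
so `v x ≥ r > 1` gives `v z ≤ d` and `v w ≤ d³` with `d = r^(-1/2)`. For two such points,
`f z₁ w₁ - f z₂ w₂` is `z₁ - z₂` times something of size `≤ d²` plus `w₁ - w₂` times something of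
size `≤ d < 1`, so the chord (or tangent) is `w = α z + β` with `v α ≤ d²` and `v β ≤ d³`. If the
third intersection point had `v x < r`, then after multiplying the Weierstrass equation by `β²`
and substituting `βy = αx - 1` the left side would be a unit and the right side small. Hence the
points with `v x ≥ r`, together with `0`, are closed under addition, and `|x(k•P)|_p ≥ |x(P)|_p`
whenever `|x(P)|_p > 1`, which is the claim on denominators.
-/

namespace IsNonarchimedean

variable {α : Type*} [Add α] {f : α → ℝ} {a b : α} {r : ℝ}

lemma apply_add_le_of_le (hf : IsNonarchimedean f) (ha : f a ≤ r) (hb : f b ≤ r) :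
    f (a + b) ≤ r :=
  (hf a b).trans (max_le ha hb)

lemma apply_add_lt_of_lt (hf : IsNonarchimedean f) (ha : f a < r) (hb : f b < r) :
    f (a + b) < r :=
  (hf a b).trans_lt (max_lt ha hb)

end IsNonarchimedean

namespace AbsoluteValue

variable {K : Type*} [Field K] (v : AbsoluteValue K ℝ) {a b : K} {d : ℝ} {m n : ℕ}

lemma apply_mul_le_apply (ha : v a ≤ 1) (b : K) : v (a * b) ≤ v b := by
  rw [map_mul]
  exact mul_le_of_le_one_left (v.nonneg b) ha

lemma apply_mul_le_pow_add (ha : v a ≤ d ^ m) (hb : v b ≤ d ^ n) : v (a * b) ≤ d ^ (m + n) := by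
  rw [map_mul, pow_add]
  exact mul_le_mul ha hb (v.nonneg b) ((v.nonneg a).trans ha)

lemma apply_pow_le_pow_mul (ha : v a ≤ d ^ m) (k : ℕ) : v (a ^ k) ≤ d ^ (m * k) := by
  rw [map_pow, pow_mul]
  exact pow_le_pow_left₀ (v.nonneg a) ha k

end AbsoluteValue

namespace WeierstrassCurve.Affine

variable {K : Type} [Field K] {v : AbsoluteValue K ℝ} (W : WeierstrassCurve.Affine K)

structure HasIntegralCoeffs (v : AbsoluteValue K ℝ) : Prop where
  a₁ : v W.a₁ ≤ 1
  a₂ : v W.a₂ ≤ 1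
  a₃ : v W.a₃ ≤ 1
  a₄ : v W.a₄ ≤ 1
  a₆ : v W.a₆ ≤ 1

def EquationZW (z w : K) : Prop :=
  w = z ^ 3 + W.a₁ * z * w + W.a₂ * z ^ 2 * w + W.a₃ * w ^ 2 + W.a₄ * z * w ^ 2 + W.a₆ * w ^ 3

/- With `f` the right-hand side of `EquationZW`, `f z₁ w₁ - f z₂ w₂` equals
`(z₁ - z₂) * zwSlopeNum z₁ w₁ z₂ + (w₁ - w₂) * (1 - zwSlopeDen w₁ z₂ w₂)`; on the diagonal these
are `∂f/∂z` and `1 - ∂f/∂w`. -/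
def zwSlopeNum (z₁ w₁ z₂ : K) : K :=
  z₁ ^ 2 + z₁ * z₂ + z₂ ^ 2 + W.a₁ * w₁ + W.a₂ * (z₁ + z₂) * w₁ + W.a₄ * w₁ ^ 2

def zwSlopeDen (w₁ z₂ w₂ : K) : K :=
  1 - (W.a₁ * z₂ + W.a₂ * z₂ ^ 2 + W.a₃ * (w₁ + w₂) + W.a₄ * z₂ * (w₁ + w₂)
    + W.a₆ * (w₁ ^ 2 + w₁ * w₂ + w₂ ^ 2))

def nearZero (v : AbsoluteValue K ℝ) (r : ℝ) : Set W.Point :=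
  {P | P = 0 ∨ r ≤ v (xCoord P)}

def zwIntercept (α x y : K) : K :=
  -1 / y - α * (-x / y)

variable {W}

lemma equationZW_of_equation {x y : K} (h : W.Equation x y) (hy : y ≠ 0) :
    W.EquationZW (-x / y) (-1 / y) := by
  rw [equation_iff] at h
  unfold EquationZW
  field_simp
  linear_combination (-1) * h

lemma sub_mul_zwSlopeDen {z₁ w₁ z₂ w₂ : K} (h₁ : W.EquationZW z₁ w₁) (h₂ : W.EquationZW z₂ w₂) :
    (w₁ - w₂) * W.zwSlopeDen w₁ z₂ w₂ = (z₁ - z₂) * W.zwSlopeNum z₁ w₁ z₂ := by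
  unfold EquationZW at h₁ h₂
  unfold zwSlopeDen zwSlopeNum
  linear_combination h₁ - h₂

/- The tangent slopes `zwSlopeNum / zwSlopeDen` in the `zw`-plane and
`(3x² + 2a₂x + a₄ - a₁y) / (y - negY x y)` in the `xy`-plane describe the same line. -/
lemma zwSlope_tangent {x y : K} (h : W.Equation x y) (hy : y ≠ 0) :
    (-1 / y * W.zwSlopeDen (-1 / y) (-x / y) (-1 / y)
      - -x / y * W.zwSlopeNum (-x / y) (-1 / y) (-x / y))
        * (3 * x ^ 2 + 2 * W.a₂ * x + W.a₄ - W.a₁ * y)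
      = W.zwSlopeNum (-x / y) (-1 / y) (-x / y) * (y - W.negY x y) := by
  rw [equation_iff] at h
  unfold zwSlopeDen zwSlopeNum negY
  field_simp
  linear_combination (-3 * (3 * x ^ 2 + 2 * W.a₂ * x + W.a₄ - W.a₁ * y)) * h

lemma zwIntercept_mul (α x : K) {y : K} (hy : y ≠ 0) : zwIntercept α x y * y = α * x - 1 := by
  unfold zwIntercept
  field_simp
  ring

lemma apply_y_sq_eq_apply_x_cube (hv : IsNonarchimedean v) (hW : W.HasIntegralCoeffs v)
    {x y : K} (h : W.Equation x y) (hx : 1 < v x) : v y ^ 2 = v x ^ 3 := by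
  rw [equation_iff] at h
  have hrhs : v (x ^ 3 + (W.a₂ * x ^ 2 + (W.a₄ * x + W.a₆))) = v x ^ 3 := by
    refine (hv.add_eq_left_of_lt ?_).trans (map_pow v x 3)
    refine hv.apply_add_lt_of_lt ?_ (hv.apply_add_lt_of_lt ?_ ?_) <;> rw [map_pow]
    · exact (v.apply_mul_le_apply hW.a₂ _).trans_lt
        (by rw [map_pow]; exact pow_lt_pow_right₀ hx (by norm_num))
    · exact (v.apply_mul_le_apply hW.a₄ _).trans_lt (lt_self_pow₀ hx (by norm_num))
    · exact hW.a₆.trans_lt (one_lt_pow₀ hx (by norm_num))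
  rw [← add_assoc, ← add_assoc, ← h, add_assoc] at hrhs
  have hxy : v x < v y := by
    by_contra! hyx
    have hlhs : v (y ^ 2 + (W.a₁ * x * y + W.a₃ * y)) ≤ v x ^ 2 := by
      refine hv.apply_add_le_of_le ?_ (hv.apply_add_le_of_le ?_ ?_)
      · rw [map_pow]; exact pow_le_pow_left₀ (v.nonneg y) hyx 2
      · rw [mul_assoc, sq]
        refine (v.apply_mul_le_apply hW.a₁ _).trans ?_
        rw [map_mul]; exact mul_le_mul_of_nonneg_left hyx (v.nonneg x)
      · exact (v.apply_mul_le_apply hW.a₃ _).trans (hyx.trans (le_self_pow₀ hx.le (by norm_num)))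
    rw [hrhs] at hlhs
    exact (pow_lt_pow_right₀ hx (by norm_num : 2 < 3)).not_ge hlhs
  have hy : 1 < v y := hx.trans hxy
  rw [← hrhs]
  refine ((hv.add_eq_left_of_lt ?_).trans (map_pow v y 2)).symm
  rw [map_pow]
  refine hv.apply_add_lt_of_lt ?_ ?_
  · rw [mul_assoc, sq]
    refine (v.apply_mul_le_apply hW.a₁ _).trans_lt ?_
    rw [map_mul]; exact mul_lt_mul_of_pos_right hxy (one_pos.trans hy)
  · exact (v.apply_mul_le_apply hW.a₃ _).trans_lt (lt_self_pow₀ hy (by norm_num))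

lemma apply_zw_le (hv : IsNonarchimedean v) (hW : W.HasIntegralCoeffs v) {x y : K} {d : ℝ}
    (h : W.Equation x y) (hd₀ : 0 ≤ d) (hd₁ : d < 1) (hx : 1 ≤ d ^ 2 * v x) :
    y ≠ 0 ∧ v (-x / y) ≤ d ∧ v (-1 / y) ≤ d ^ 3 := by
  have hx₁ : 1 < v x := by nlinarith [v.nonneg x]
  have hyx := apply_y_sq_eq_apply_x_cube hv hW h hx₁
  have hy₀ : 0 < v y := by
    refine (v.nonneg y).lt_of_ne' fun h₀ => ?_
    rw [h₀, zero_pow two_ne_zero] at hyx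
    exact (pow_pos (one_pos.trans hx₁) 3).ne' hyx.symm
  have hz : v (-x / y) = v x / v y := by rw [map_div₀, map_neg_eq_map]
  have hw : v (-1 / y) = v (-x / y) ^ 3 := by
    rw [hz, map_div₀, map_neg_eq_map, map_one, div_pow, ← hyx]
    field_simp
  have hzd : v (-x / y) ≤ d := by
    refine (pow_le_pow_iff_left₀ (v.nonneg _) hd₀ two_ne_zero).mp ?_
    rw [hz, div_pow, hyx, div_le_iff₀ (by positivity)]
    nlinarith [v.nonneg x]
  exact ⟨v.pos_iff.mp hy₀, hzd, hw ▸ pow_le_pow_left₀ (v.nonneg _) hzd 3⟩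

lemma apply_zwSlopeNum_le (hv : IsNonarchimedean v) (hW : W.HasIntegralCoeffs v)
    {z₁ w₁ z₂ : K} {d : ℝ} (hd₁ : d ≤ 1) (hz₁ : v z₁ ≤ d) (hw₁ : v w₁ ≤ d ^ 3) (hz₂ : v z₂ ≤ d) :
    v (W.zwSlopeNum z₁ w₁ z₂) ≤ d ^ 2 := by
  have mono {a : K} {m n : ℕ} (ha : v a ≤ d ^ m) (hnm : n ≤ m) : v a ≤ d ^ n :=
    ha.trans (pow_le_pow_of_le_one ((v.nonneg _).trans hz₁) hd₁ hnm)
  have coeff {a : K} (ha : v a ≤ 1) : v a ≤ d ^ 0 := by rwa [pow_zero]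
  rw [← pow_one d] at hz₁ hz₂
  unfold zwSlopeNum
  refine hv.apply_add_le_of_le (hv.apply_add_le_of_le (hv.apply_add_le_of_le
    (hv.apply_add_le_of_le (hv.apply_add_le_of_le ?_ ?_) ?_) ?_) ?_) ?_
  · exact v.apply_pow_le_pow_mul hz₁ 2
  · exact v.apply_mul_le_pow_add hz₁ hz₂
  · exact v.apply_pow_le_pow_mul hz₂ 2
  · exact mono (v.apply_mul_le_pow_add (coeff hW.a₁) hw₁) (by norm_num)
  · exact mono (v.apply_mul_le_pow_add (v.apply_mul_le_pow_add (coeff hW.a₂)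
      (hv.apply_add_le_of_le hz₁ hz₂)) hw₁) (by norm_num)
  · exact mono (v.apply_mul_le_pow_add (coeff hW.a₄) (v.apply_pow_le_pow_mul hw₁ 2)) (by norm_num)

lemma apply_zwSlopeDen_eq_one (hv : IsNonarchimedean v) (hW : W.HasIntegralCoeffs v)
    {w₁ z₂ w₂ : K} {d : ℝ} (hd₁ : d < 1) (hw₁ : v w₁ ≤ d ^ 3) (hz₂ : v z₂ ≤ d)
    (hw₂ : v w₂ ≤ d ^ 3) : v (W.zwSlopeDen w₁ z₂ w₂) = 1 := by
  have mono {a : K} {m n : ℕ} (ha : v a ≤ d ^ m) (hnm : n ≤ m) : v a ≤ d ^ n :=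
    ha.trans (pow_le_pow_of_le_one ((v.nonneg _).trans hz₂) hd₁.le hnm)
  have coeff {a : K} (ha : v a ≤ 1) : v a ≤ d ^ 0 := by rwa [pow_zero]
  rw [← pow_one d] at hz₂ hd₁
  have hw : v (w₁ + w₂) ≤ d ^ 3 := hv.apply_add_le_of_le hw₁ hw₂
  unfold zwSlopeDen
  rw [sub_eq_add_neg]
  refine (hv.add_eq_left_of_lt ?_).trans (map_one v)
  rw [map_neg_eq_map, map_one]
  refine lt_of_le_of_lt ?_ hd₁
  refine hv.apply_add_le_of_le (hv.apply_add_le_of_le (hv.apply_add_le_of_le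
    (hv.apply_add_le_of_le ?_ ?_) ?_) ?_) ?_
  · exact v.apply_mul_le_pow_add (coeff hW.a₁) hz₂
  · exact mono (v.apply_mul_le_pow_add (coeff hW.a₂) (v.apply_pow_le_pow_mul hz₂ 2)) (by norm_num)
  · exact mono (v.apply_mul_le_pow_add (coeff hW.a₃) hw) (by norm_num)
  · exact mono (v.apply_mul_le_pow_add (v.apply_mul_le_pow_add (coeff hW.a₄) hz₂) hw)
      (by norm_num)
  · refine mono (v.apply_mul_le_pow_add (coeff hW.a₆) (hv.apply_add_le_of_le
      (hv.apply_add_le_of_le (v.apply_pow_le_pow_mul hw₁ 2) (v.apply_mul_le_pow_add hw₁ hw₂))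
      (v.apply_pow_le_pow_mul hw₂ 2))) (by norm_num)

lemma apply_sq_mul_rhs_lt_one (hv : IsNonarchimedean v) (hW : W.HasIntegralCoeffs v)
    {β X : K} {d : ℝ} (hd₀ : 0 ≤ d) (hd₁ : d < 1) (hβ : v β ≤ d ^ 3) (hX : d ^ 2 * v X < 1) :
    v (β ^ 2 * X ^ 3 + (W.a₂ * (β ^ 2 * X ^ 2) + (W.a₄ * (β ^ 2 * X) + W.a₆ * β ^ 2))) < 1 := by
  have hq₀ : 0 ≤ d ^ 2 * v X := by positivity
  have hd : d ^ 2 < 1 := pow_lt_one₀ hd₀ hd₁ two_ne_zero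
  have hβ₂ : v (β ^ 2) ≤ d ^ 6 := by
    rw [map_pow, show 6 = 3 * 2 by rfl, pow_mul]; exact pow_le_pow_left₀ (v.nonneg β) hβ 2
  refine hv.apply_add_lt_of_lt ?_ (hv.apply_add_lt_of_lt
    ((v.apply_mul_le_apply hW.a₂ _).trans_lt ?_) (hv.apply_add_lt_of_lt
    ((v.apply_mul_le_apply hW.a₄ _).trans_lt ?_) ((v.apply_mul_le_apply hW.a₆ _).trans_lt ?_)))
  · calc v (β ^ 2 * X ^ 3) ≤ d ^ 6 * v X ^ 3 := by rw [map_mul, map_pow v X]; gcongr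
      _ = (d ^ 2 * v X) ^ 3 := by ring
      _ < 1 := pow_lt_one₀ hq₀ hX three_ne_zero
  · calc v (β ^ 2 * X ^ 2) ≤ d ^ 6 * v X ^ 2 := by rw [map_mul, map_pow v X]; gcongr
      _ = d ^ 2 * (d ^ 2 * v X) ^ 2 := by ring
      _ < 1 := by nlinarith [pow_lt_one₀ hq₀ hX two_ne_zero]
  · calc v (β ^ 2 * X) ≤ d ^ 6 * v X := by rw [map_mul]; gcongr
      _ = (d ^ 2) ^ 2 * (d ^ 2 * v X) := by ring
      _ < 1 := by nlinarith [pow_lt_one₀ (by positivity) hd two_ne_zero]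
  · exact hβ₂.trans_lt (pow_lt_one₀ hd₀ hd₁ (by norm_num))

lemma one_le_mul_apply_of_line (hv : IsNonarchimedean v) (hW : W.HasIntegralCoeffs v)
    {α β X Y : K} {d : ℝ} (hd₀ : 0 ≤ d) (hd₁ : d < 1) (hα : v α ≤ d ^ 2) (hβ : v β ≤ d ^ 3)
    (hline : β * Y = α * X - 1) (h : W.Equation X Y) : 1 ≤ d ^ 2 * v X := by
  by_contra! hX
  have hT : v (β * Y) = 1 := by
    rw [hline, sub_eq_add_neg]
    refine (hv.add_eq_right_of_lt ?_).trans (by rw [map_neg_eq_map, map_one])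
    rw [map_neg_eq_map, map_one, map_mul]
    exact (mul_le_mul_of_nonneg_right hα (v.nonneg X)).trans_lt hX
  rw [equation_iff] at h
  have key : (β * Y) ^ 2 + (W.a₁ * (X * β * (β * Y)) + W.a₃ * (β * (β * Y)))
      = β ^ 2 * X ^ 3 + (W.a₂ * (β ^ 2 * X ^ 2) + (W.a₄ * (β ^ 2 * X) + W.a₆ * β ^ 2)) := by
    linear_combination β ^ 2 * h
  have hlhs : v ((β * Y) ^ 2 + (W.a₁ * (X * β * (β * Y)) + W.a₃ * (β * (β * Y)))) = 1 := by
    refine (hv.add_eq_left_of_lt ?_).trans (by rw [map_pow, hT, one_pow])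
    rw [map_pow, hT, one_pow]
    refine hv.apply_add_lt_of_lt ((v.apply_mul_le_apply hW.a₁ _).trans_lt ?_)
      ((v.apply_mul_le_apply hW.a₃ _).trans_lt ?_)
    · calc v (X * β * (β * Y)) ≤ v X * d ^ 3 * 1 := by
            rw [map_mul, map_mul, hT]; gcongr
        _ = d * (d ^ 2 * v X) := by ring
        _ < 1 := by nlinarith
    · rw [map_mul, hT, mul_one]
      exact hβ.trans_lt (pow_lt_one₀ hd₀ hd₁ three_ne_zero)
  rw [key] at hlhs
  exact (apply_sq_mul_rhs_lt_one hv hW hd₀ hd₁ hβ hX).ne hlhs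

variable [DecidableEq K]

lemma zwIntercept_mul_slope_of_X_ne {x₁ y₁ x₂ y₂ α : K} (h₁ : W.Equation x₁ y₁)
    (h₂ : W.Equation x₂ y₂) (hy₁ : y₁ ≠ 0) (hy₂ : y₂ ≠ 0) (hx : x₁ ≠ x₂)
    (hden : W.zwSlopeDen (-1 / y₁) (-x₂ / y₂) (-1 / y₂) ≠ 0)
    (hα : W.zwSlopeNum (-x₁ / y₁) (-1 / y₁) (-x₂ / y₂)
      = α * W.zwSlopeDen (-1 / y₁) (-x₂ / y₂) (-1 / y₂)) :
    zwIntercept α x₁ y₁ * W.slope x₁ x₂ y₁ y₂ = α := by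
  have hsec : -1 / y₁ - -1 / y₂ = α * (-x₁ / y₁ - -x₂ / y₂) := by
    apply mul_left_cancel₀ hden
    linear_combination
      sub_mul_zwSlopeDen (equationZW_of_equation h₁ hy₁) (equationZW_of_equation h₂ hy₂)
        + (-x₁ / y₁ - -x₂ / y₂) * hα
  have hβ₂ : zwIntercept α x₁ y₁ * y₂ = α * x₂ - 1 := by
    rw [show zwIntercept α x₁ y₁ = zwIntercept α x₂ y₂ by
      unfold zwIntercept; linear_combination hsec]
    exact zwIntercept_mul α x₂ hy₂
  have hx₀ : x₁ - x₂ ≠ 0 := sub_ne_zero.mpr hx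
  rw [slope_of_X_ne hx]
  apply mul_right_cancel₀ hx₀
  linear_combination zwIntercept_mul α x₁ hy₁ - hβ₂
    + zwIntercept α x₁ y₁ * div_mul_cancel₀ (y₁ - y₂) hx₀

lemma zwIntercept_mul_slope_self {x y α : K} (h : W.Equation x y) (hy : y ≠ 0)
    (hQ : y ≠ W.negY x y) (hden : W.zwSlopeDen (-1 / y) (-x / y) (-1 / y) ≠ 0)
    (hα : W.zwSlopeNum (-x / y) (-1 / y) (-x / y) = α * W.zwSlopeDen (-1 / y) (-x / y) (-1 / y)) :
    zwIntercept α x y * W.slope x x y y = α := by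
  rw [slope_of_Y_ne rfl hQ, mul_div_assoc', div_eq_iff (sub_ne_zero.mpr hQ)]
  apply mul_left_cancel₀ hden
  unfold zwIntercept
  linear_combination zwSlope_tangent h hy
    + (-x / y * (3 * x ^ 2 + 2 * W.a₂ * x + W.a₄ - W.a₁ * y) + (y - W.negY x y)) * hα

lemma exists_line_zw (hv : IsNonarchimedean v) (hW : W.HasIntegralCoeffs v)
    {x₁ y₁ x₂ y₂ : K} {d : ℝ} (hd₀ : 0 ≤ d) (hd₁ : d < 1) (h₁ : W.Equation x₁ y₁)
    (h₂ : W.Equation x₂ y₂) (hx₁ : 1 ≤ d ^ 2 * v x₁) (hx₂ : 1 ≤ d ^ 2 * v x₂)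
    (hxy : ¬(x₁ = x₂ ∧ y₁ = W.negY x₂ y₂)) :
    ∃ α β : K, v α ≤ d ^ 2 ∧ v β ≤ d ^ 3 ∧ β * y₁ = α * x₁ - 1 ∧ β * W.slope x₁ x₂ y₁ y₂ = α := by
  obtain ⟨hy₁, hz₁, hw₁⟩ := apply_zw_le hv hW h₁ hd₀ hd₁ hx₁
  obtain ⟨hy₂, hz₂, hw₂⟩ := apply_zw_le hv hW h₂ hd₀ hd₁ hx₂
  have hden := apply_zwSlopeDen_eq_one hv hW hd₁ hw₁ hz₂ hw₂
  have hden₀ : W.zwSlopeDen (-1 / y₁) (-x₂ / y₂) (-1 / y₂) ≠ 0 := v.ne_zero_iff.mp (by simp [hden])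
  obtain ⟨α, hα_def⟩ : ∃ α, W.zwSlopeNum (-x₁ / y₁) (-1 / y₁) (-x₂ / y₂)
      = α * W.zwSlopeDen (-1 / y₁) (-x₂ / y₂) (-1 / y₂) :=
    ⟨_, (div_mul_cancel₀ _ hden₀).symm⟩
  have hα : v α ≤ d ^ 2 := by
    have := apply_zwSlopeNum_le hv hW hd₁.le hz₁ hw₁ hz₂
    rwa [hα_def, map_mul, hden, mul_one] at this
  refine ⟨α, zwIntercept α x₁ y₁, hα, ?_, zwIntercept_mul α x₁ hy₁, ?_⟩
  · rw [zwIntercept, sub_eq_add_neg]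
    refine hv.apply_add_le_of_le hw₁ ?_
    rw [map_neg_eq_map, map_mul, pow_succ]
    exact mul_le_mul hα hz₁ (v.nonneg _) (by positivity)
  by_cases hx : x₁ = x₂
  · have hy : y₁ = y₂ := (Y_eq_of_X_eq h₁ h₂ hx).resolve_right fun hy => hxy ⟨hx, hy⟩
    subst hx hy
    exact zwIntercept_mul_slope_self h₁ hy₁ (fun hy => hxy ⟨rfl, hy⟩) hden₀ hα_def
  · exact zwIntercept_mul_slope_of_X_ne h₁ h₂ hy₁ hy₂ hx hden₀ hα_def

lemma add_mem_nearZero (hv : IsNonarchimedean v) (hW : W.HasIntegralCoeffs v) {r : ℝ}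
    (hr : 1 < r) {P Q : W.Point} (hP : P ∈ W.nearZero v r) (hQ : Q ∈ W.nearZero v r) :
    P + Q ∈ W.nearZero v r := by
  rcases P with _ | @⟨x₁, y₁, h₁⟩
  · rwa [← Point.zero_def, zero_add]
  rcases Q with _ | @⟨x₂, y₂, h₂⟩
  · rwa [← Point.zero_def, add_zero]
  by_cases hxy : x₁ = x₂ ∧ y₁ = W.negY x₂ y₂
  · exact Or.inl (Point.add_of_Y_eq hxy.1 hxy.2)
  right
  rw [Point.add_some hxy]
  have hr₀ : 0 < r := one_pos.trans hr
  have hd₂ : (√r)⁻¹ ^ 2 = r⁻¹ := by rw [inv_pow, Real.sq_sqrt hr₀.le]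
  have hd₁ : (√r)⁻¹ < 1 := inv_lt_one_of_one_lt₀ (Real.lt_sqrt_of_sq_lt (by simpa using hr))
  have near {x y : K} {h : W.Nonsingular x y} (hP : Point.some x y h ∈ W.nearZero v r) :
      1 ≤ (√r)⁻¹ ^ 2 * v x := by
    rw [hd₂, one_le_inv_mul₀ hr₀]
    exact hP.resolve_left (Point.some_ne_zero h)
  obtain ⟨α, β, hα, hβ, hβy, hβL⟩ :=
    exists_line_zw hv hW (by positivity) hd₁ h₁.1 h₂.1 (near hP) (near hQ) hxy
  have hX := one_le_mul_apply_of_line hv hW (by positivity) hd₁ hα hβ (Y := W.negAddY x₁ x₂ y₁ _)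
    (by rw [negAddY]; linear_combination (W.addX x₁ x₂ (W.slope x₁ x₂ y₁ y₂) - x₁) * hβL + hβy)
    (equation_negAdd h₁.1 h₂.1 hxy)
  rwa [hd₂, one_le_inv_mul₀ hr₀] at hX

lemma nsmul_mem_nearZero (hv : IsNonarchimedean v) (hW : W.HasIntegralCoeffs v) {r : ℝ}
    (hr : 1 < r) {P : W.Point} (hP : P ∈ W.nearZero v r) (k : ℕ) : k • P ∈ W.nearZero v r := by
  induction k with
  | zero => exact Or.inl (zero_nsmul P)
  | succ k ih => rw [succ_nsmul]; exact add_mem_nearZero hv hW hr ih hP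

lemma apply_xCoord_le_apply_xCoord_nsmul (hv : IsNonarchimedean v) (hW : W.HasIntegralCoeffs v)
    {P : W.Point} (hP : 1 < v (xCoord P)) {k : ℕ} (hk : k • P ≠ 0) :
    v (xCoord P) ≤ v (xCoord (k • P)) :=
  (nsmul_mem_nearZero hv hW hP (Or.inr le_rfl) k).resolve_left hk

end WeierstrassCurve.Affine

lemma Rat.AbsoluteValue.isNonarchimedean_padic (p : ℕ) [Fact p.Prime] :
    IsNonarchimedean (Rat.AbsoluteValue.padic p) := fun a b => by
  simp only [Rat.AbsoluteValue.padic_eq_padicNorm]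
  exact_mod_cast padicNorm.nonarchimedean

lemma hasIntegralCoeffs_curveQ {v : AbsoluteValue ℚ ℝ} (hv : IsNonarchimedean v)
    (a₁ a₂ a₃ a₄ a₆ : ℤ) : (curveQ a₁ a₂ a₃ a₄ a₆).HasIntegralCoeffs v :=
  ⟨hv.apply_intCast_le_one, hv.apply_intCast_le_one, hv.apply_intCast_le_one,
    hv.apply_intCast_le_one, hv.apply_intCast_le_one⟩

lemma Rat.pow_factorization_den (p : ℕ) [hp : Fact p.Prime] (x : ℚ) :
    (p : ℚ) ^ x.den.factorization p = max 1 (padicNorm p x) := by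
  rcases eq_or_ne x 0 with rfl | hx
  · simp
  rw [padicNorm.eq_zpow_of_nonzero hx, padicValRat_def, Nat.factorization_def _ hp.out]
  by_cases hpd : p ∣ x.den
  · have hpn : ¬(p : ℤ) ∣ x.num := fun hpn => hp.out.one_lt.ne' <|
      Nat.eq_one_of_dvd_coprimes x.reduced (Int.natCast_dvd.mp hpn) hpd
    rw [padicValInt.eq_zero_of_not_dvd hpn, Nat.cast_zero, zero_sub, neg_neg, zpow_natCast,
      max_eq_right]
    exact one_le_pow₀ (by exact_mod_cast hp.out.one_le)
  · rw [padicValNat.eq_zero_of_not_dvd hpd, pow_zero, Nat.cast_zero, sub_zero, max_eq_left]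
    exact zpow_le_one_of_nonpos₀ (by exact_mod_cast hp.out.one_le) (by simp)

theorem den_dvd_den_smul_general (a₁ a₂ a₃ a₄ a₆ : ℤ)
    (P : (curveQ a₁ a₂ a₃ a₄ a₆).Point)
    (k : ℕ) (hkP : k • P ≠ 0) :
    (xCoord P).den ∣ (xCoord (k • P)).den ∧
      ∀ p : ℕ, p.Prime →
        (xCoord P).den.factorization p ≤ (xCoord (k • P)).den.factorization p := by
  have hfac : ∀ p : ℕ, p.Prime →
      (xCoord P).den.factorization p ≤ (xCoord (k • P)).den.factorization p := by
    intro p hp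
    have := Fact.mk hp
    rw [← pow_le_pow_iff_right₀ (by exact_mod_cast hp.one_lt : (1 : ℚ) < p),
      Rat.pow_factorization_den, Rat.pow_factorization_den]
    rcases le_or_gt (padicNorm p (xCoord P)) 1 with hle | hlt
    · exact (max_eq_left hle).trans_le (le_max_left _ _)
    · have hv := Rat.AbsoluteValue.isNonarchimedean_padic p
      have hkx := WeierstrassCurve.Affine.apply_xCoord_le_apply_xCoord_nsmul hv
        (hasIntegralCoeffs_curveQ hv a₁ a₂ a₃ a₄ a₆)
        (by simpa using (mod_cast hlt : (1 : ℝ) < padicNorm p (xCoord P))) hkP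
      exact max_le_max le_rfl (by simpa using hkx)
  exact ⟨(Nat.factorization_prime_le_iff_dvd (Rat.den_ne_zero _) (Rat.den_ne_zero _)).mp hfac,
    hfac⟩

/-- If `P` is an affine rational point on an elliptic curve over `ℚ` with integer
coefficients and `k ≥ 1` is such that `k•P` is also affine, then `den(x(P))` divides
`den(x(k•P))`; equivalently `v_p(den(x(P))) ≤ v_p(den(x(k•P)))` for every prime `p`. -/
theorem den_dvd_den_smul (a₁ a₂ a₃ a₄ a₆ : ℤ)
    (P : (curveQ a₁ a₂ a₃ a₄ a₆).Point) (hP : P ≠ 0)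
    (k : ℕ) (hk : 1 ≤ k) (hkP : k • P ≠ 0) :
    (xCoord P).den ∣ (xCoord (k • P)).den ∧
      ∀ p : ℕ, p.Prime →
        (xCoord P).den.factorization p ≤ (xCoord (k • P)).den.factorization p :=
  den_dvd_den_smul_general a₁ a₂ a₃ a₄ a₆ P k hkP
end

section
/- Let E be a minimal short Weierstrass elliptic curve over K = ℚ(t), let P′ ∈ E(K) be a non-torsion point, let k ≥ 2 be an integer, and set P := k•P′. Then B_{P′} divides B_P, and the quotient B_P / B_{P′} is coprime to B_{P′} in ℚ[t]. -/
/-!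
Fix a prime `π ∣ B_{P′}`, say `π^a ∥ B_{P′}`, and scale coordinates by `u = π^a`. Because `π^{2a}`
exactly divides the denominator of `x(P′)`, the point `(u²x, u³y)` reduces modulo `π` to a point
`(c, d)` with `c ≠ 0`; as `u⁴A` and `u⁶B` reduce to `0`, it lies on the cuspidal cubic `Y² = X³`,
so `(c, d) = (t⁻², t⁻³)` with `t ≠ 0`. On that cubic the chord-and-tangent construction is the
additive law `(s, t) ↦ s + t`, and reduction commutes with it, so `k•P′` reduces to
`((kt)⁻², (kt)⁻³)`. In characteristic zero `kt ≠ 0`, so `π^{2a}` also exactly divides the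
denominator of `x(k•P′)`: `B_P` and `B_{P′}` have the same `π`-adic valuation at every prime
dividing `B_{P′}`, which gives both the divisibility and the coprimality.
-/

open Polynomial

/-- The short Weierstrass curve `y² = x³ + A·x + B` over `K = ℚ(t)`. -/
noncomputable def curveQt (A B : Polynomial ℚ) : WeierstrassCurve.Affine (RatFunc ℚ) :=
  { a₁ := 0, a₂ := 0, a₃ := 0,
    a₄ := algebraMap (Polynomial ℚ) (RatFunc ℚ) A,
    a₆ := algebraMap (Polynomial ℚ) (RatFunc ℚ) B }

/-- A short Weierstrass curve `y² = x³ + A·x + B` over `ℚ(t)` is minimal if there is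
no irreducible `π ∈ ℚ[t]` with `π⁴ ∣ A` and `π⁶ ∣ B`. -/
def MinimalQt (A B : Polynomial ℚ) : Prop :=
  ¬ ∃ π : Polynomial ℚ, Irreducible π ∧ π ^ 4 ∣ A ∧ π ^ 6 ∣ B

/-- The term `Bseq n` of a sequence of polynomials has a primitive divisor if some monic
irreducible `d ∈ ℚ[t]` divides `Bseq n` but divides no `Bseq m` with `1 ≤ m < n`. -/
def HasPrimitiveDivisor (Bseq : ℕ → Polynomial ℚ) (n : ℕ) : Prop :=
  ∃ d : Polynomial ℚ, d.Monic ∧ Irreducible d ∧ d ∣ Bseq n ∧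
    ∀ m : ℕ, 1 ≤ m → m < n → ¬ d ∣ Bseq m

section Residue

variable {R K F : Type*} [CommRing R] [Field K] [Algebra R K] [Field F]

/-- `ξ` lies in the localization of `R` at the prime `ker φ`, and `φ` maps it to `r`. -/
def HasResidue (φ : R →+* F) (ξ : K) (r : F) : Prop :=
  ∃ p q : R, φ q ≠ 0 ∧ ξ * algebraMap R K q = algebraMap R K p ∧ r * φ q = φ p

variable {φ : R →+* F}

theorem hasResidue_algebraMap (p : R) : HasResidue φ (algebraMap R K p) (φ p) :=
  ⟨p, 1, by simp, by simp, by simp⟩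

theorem hasResidue_ofNat (n : ℕ) [n.AtLeastTwo] :
    HasResidue φ (OfNat.ofNat n : K) (OfNat.ofNat n : F) := by
  have := hasResidue_algebraMap (K := K) (φ := φ) (OfNat.ofNat n)
  rwa [map_ofNat, map_ofNat] at this

theorem hasResidue_pow_mul_algebraMap {π : R} (hπ : φ π = 0) {n : ℕ} (hn : 0 < n) (p : R) :
    HasResidue φ (algebraMap R K π ^ n * algebraMap R K p) 0 := by
  simpa [hπ, zero_pow hn.ne'] using hasResidue_algebraMap (K := K) (φ := φ) (π ^ n * p)

namespace HasResidue

variable {ξ η : K} {r s : F}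

theorem unique [IsFractionRing R K] (hr : HasResidue φ ξ r) (hs : HasResidue φ ξ s) : r = s := by
  obtain ⟨p₁, q₁, hq₁, he₁, hr₁⟩ := hr
  obtain ⟨p₂, q₂, hq₂, he₂, hs₂⟩ := hs
  have hpq : p₁ * q₂ = p₂ * q₁ := IsFractionRing.injective R K <| by
    rw [map_mul, map_mul, ← he₁, ← he₂]
    ring
  have hφpq := congrArg φ hpq
  rw [map_mul, map_mul] at hφpq
  have : (r - s) * (φ q₁ * φ q₂) = 0 := by
    linear_combination φ q₂ * hr₁ - φ q₁ * hs₂ + hφpq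
  exact sub_eq_zero.mp ((mul_eq_zero.mp this).resolve_right (mul_ne_zero hq₁ hq₂))

theorem add (hr : HasResidue φ ξ r) (hs : HasResidue φ η s) :
    HasResidue φ (ξ + η) (r + s) := by
  obtain ⟨p₁, q₁, hq₁, he₁, hr₁⟩ := hr
  obtain ⟨p₂, q₂, hq₂, he₂, hs₂⟩ := hs
  refine ⟨p₁ * q₂ + p₂ * q₁, q₁ * q₂, by simp [hq₁, hq₂], ?_, ?_⟩
  · simp only [map_add, map_mul]
    linear_combination algebraMap R K q₂ * he₁ + algebraMap R K q₁ * he₂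
  · simp only [map_add, map_mul]
    linear_combination φ q₂ * hr₁ + φ q₁ * hs₂

theorem mul (hr : HasResidue φ ξ r) (hs : HasResidue φ η s) :
    HasResidue φ (ξ * η) (r * s) := by
  obtain ⟨p₁, q₁, hq₁, he₁, hr₁⟩ := hr
  obtain ⟨p₂, q₂, hq₂, he₂, hs₂⟩ := hs
  refine ⟨p₁ * p₂, q₁ * q₂, by simp [hq₁, hq₂], ?_, ?_⟩
  · simp only [map_mul]
    linear_combination η * algebraMap R K q₂ * he₁ + algebraMap R K p₁ * he₂
  · simp only [map_mul]
    linear_combination s * φ q₂ * hr₁ + φ p₁ * hs₂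

theorem pow (hr : HasResidue φ ξ r) (n : ℕ) : HasResidue φ (ξ ^ n) (r ^ n) := by
  induction n with
  | zero => simpa using hasResidue_algebraMap (K := K) (φ := φ) 1
  | succ n ih => simpa only [pow_succ] using ih.mul hr

theorem neg (hr : HasResidue φ ξ r) : HasResidue φ (-ξ) (-r) := by
  obtain ⟨p, q, hq, he, hr⟩ := hr
  exact ⟨-p, q, hq, by rw [neg_mul, he, map_neg], by rw [neg_mul, hr, map_neg]⟩

theorem sub (hr : HasResidue φ ξ r) (hs : HasResidue φ η s) :
    HasResidue φ (ξ - η) (r - s) := by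
  simpa only [sub_eq_add_neg] using hr.add hs.neg

theorem div [IsFractionRing R K] (hr : HasResidue φ ξ r) (hs : HasResidue φ η s)
    (hs0 : s ≠ 0) : HasResidue φ (ξ / η) (r / s) := by
  obtain ⟨p₁, q₁, hq₁, he₁, hr₁⟩ := hr
  obtain ⟨p₂, q₂, hq₂, he₂, hs₂⟩ := hs
  have hp₂ : φ p₂ ≠ 0 := hs₂ ▸ mul_ne_zero hs0 hq₂
  have hφ_eq_zero {p : R} (hp : algebraMap R K p = 0) : φ p = 0 := by
    rw [IsFractionRing.injective R K (hp.trans (map_zero _).symm), map_zero]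
  have hq₂' : algebraMap R K q₂ ≠ 0 := mt hφ_eq_zero hq₂
  have hη : η ≠ 0 := by
    rintro rfl
    exact hp₂ (hφ_eq_zero (by rw [← he₂, zero_mul]))
  refine ⟨p₁ * q₂, q₁ * p₂, by simp [hq₁, hp₂], ?_, ?_⟩
  · rw [map_mul, map_mul, ← he₂]
    field_simp
    linear_combination he₁
  · rw [map_mul, map_mul, ← hs₂]
    field_simp
    linear_combination hr₁

end HasResidue

end Residue

section CuspReduction

open WeierstrassCurve WeierstrassCurve.Affine

variable {R K F : Type*} [CommRing R] [Field K] [Algebra R K] [Field F]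
  {φ : R →+* F} {W : WeierstrassCurve.Affine K} {u : K}

/-- After scaling by `u`, the point `P` reduces under `φ` to the point `(t⁻², t⁻³)` of the
cuspidal cubic `Y² = X³`. -/
def HasCuspParam (φ : R →+* F) (u : K) (P : W.Point) (t : F) : Prop :=
  ∃ (x y : K) (h : W.Nonsingular x y), P = .some x y h ∧
    HasResidue φ (u ^ 2 * x) (t ^ 2)⁻¹ ∧ HasResidue φ (u ^ 3 * y) (t ^ 3)⁻¹

variable [W.IsShortNF] [DecidableEq K]

theorem hasCuspParam_add_of_hasResidue_slope {x₁ y₁ x₂ y₂ : K} {h₁ : W.Nonsingular x₁ y₁}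
    {h₂ : W.Nonsingular x₂ y₂} (hxy : ¬(x₁ = x₂ ∧ y₁ = W.negY x₂ y₂)) {s t ℓ : F}
    (hx₁ : HasResidue φ (u ^ 2 * x₁) (s ^ 2)⁻¹) (hy₁ : HasResidue φ (u ^ 3 * y₁) (s ^ 3)⁻¹)
    (hx₂ : HasResidue φ (u ^ 2 * x₂) (t ^ 2)⁻¹)
    (hℓ : HasResidue φ (u * W.slope x₁ x₂ y₁ y₂) ℓ)
    (hX : ℓ ^ 2 - (s ^ 2)⁻¹ - (t ^ 2)⁻¹ = ((s + t) ^ 2)⁻¹)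
    (hY : -(ℓ * (((s + t) ^ 2)⁻¹ - (s ^ 2)⁻¹) + (s ^ 3)⁻¹) = ((s + t) ^ 3)⁻¹) :
    HasCuspParam φ u (.some _ _ h₁ + .some _ _ h₂) (s + t) := by
  rw [Point.add_some hxy]
  have hX' : HasResidue φ (u ^ 2 * W.addX x₁ x₂ (W.slope x₁ x₂ y₁ y₂)) ((s + t) ^ 2)⁻¹ := by
    rw [← hX]
    convert ((hℓ.pow 2).sub hx₁).sub hx₂ using 1
    simp only [addX, a₁_of_isShortNF, a₂_of_isShortNF]
    ring
  refine ⟨_, _, _, rfl, hX', ?_⟩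
  rw [← hY]
  convert ((hℓ.mul (hX'.sub hx₁)).add hy₁).neg using 1
  simp only [addY, negY, negAddY, a₁_of_isShortNF,
    a₃_of_isShortNF]
  ring

theorem HasCuspParam.add [IsFractionRing R K] {P Q : W.Point} {s t : F}
    (hP : HasCuspParam φ u P s) (hQ : HasCuspParam φ u Q t) (hs : s ≠ 0) (ht : t ≠ 0)
    (hst : s ^ 2 ≠ t ^ 2) : HasCuspParam φ u (P + Q) (s + t) := by
  obtain ⟨x₁, y₁, h₁, rfl, hx₁, hy₁⟩ := hP
  obtain ⟨x₂, y₂, h₂, rfl, hx₂, hy₂⟩ := hQ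
  have hc : (s ^ 2)⁻¹ - (t ^ 2)⁻¹ ≠ 0 := by rwa [sub_ne_zero, Ne, inv_inj]
  have hx : x₁ ≠ x₂ := by
    rintro rfl
    exact hc (sub_eq_zero.mpr (hx₁.unique hx₂))
  have hℓ : HasResidue φ (u * W.slope x₁ x₂ y₁ y₂)
      (((s ^ 3)⁻¹ - (t ^ 3)⁻¹) / ((s ^ 2)⁻¹ - (t ^ 2)⁻¹)) := by
    have hu : u * W.slope x₁ x₂ y₁ y₂ =
        (u ^ 3 * y₁ - u ^ 3 * y₂) / (u ^ 2 * x₁ - u ^ 2 * x₂) := by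
      rw [slope_of_X_ne hx]
      rcases eq_or_ne u 0 with rfl | hu
      · simp
      · field_simp [sub_ne_zero.mpr hx]
    rw [hu]
    exact (hy₁.sub hy₂).div (hx₁.sub hx₂) hc
  have hadd : s + t ≠ 0 := fun h => hst (by rw [eq_neg_of_add_eq_zero_left h]; ring)
  refine hasCuspParam_add_of_hasResidue_slope (fun h => hx h.1) hx₁ hy₁ hx₂ hℓ ?_ ?_
  · field_simp
    ring
  · field_simp
    ring

theorem HasCuspParam.double [IsFractionRing R K] [CharZero F]
    (ha₄ : HasResidue φ (u ^ 4 * W.a₄) 0) {P : W.Point} {t : F} (hP : HasCuspParam φ u P t)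
    (ht : t ≠ 0) : HasCuspParam φ u (P + P) (t + t) := by
  obtain ⟨x, y, h, rfl, hx, hy⟩ := hP
  have hny : HasResidue φ (u ^ 3 * W.negY x y) (-(t ^ 3)⁻¹) := by
    simpa [negY] using hy.neg
  have hd : (t ^ 3)⁻¹ - -(t ^ 3)⁻¹ ≠ 0 := by
    rw [sub_neg_eq_add, ← two_mul]
    exact mul_ne_zero two_ne_zero (by simpa using ht)
  have hy' : y ≠ W.negY x y := by
    intro hyy
    rw [← hyy] at hny
    exact hd (sub_eq_zero.mpr (hy.unique hny))
  have hℓ : HasResidue φ (u * W.slope x x y y)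
      (3 * ((t ^ 2)⁻¹) ^ 2 / ((t ^ 3)⁻¹ - -(t ^ 3)⁻¹)) := by
    have hu : u * W.slope x x y y =
        (3 * (u ^ 2 * x) ^ 2 + u ^ 4 * W.a₄) / (u ^ 3 * y - u ^ 3 * W.negY x y) := by
      rw [slope_of_Y_ne rfl hy', a₁_of_isShortNF,
        a₂_of_isShortNF]
      rcases eq_or_ne u 0 with rfl | hu
      · simp
      · field_simp [sub_ne_zero.mpr hy']
        ring
    rw [hu]
    simpa using (((hasResidue_ofNat 3).mul (hx.pow 2)).add ha₄).div (hy.sub hny) hd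
  refine hasCuspParam_add_of_hasResidue_slope (fun h => hy' h.2) hx hy hx hℓ ?_ ?_
  · field_simp
    ring
  · field_simp
    ring

theorem HasCuspParam.nsmul [IsFractionRing R K] [CharZero F]
    (ha₄ : HasResidue φ (u ^ 4 * W.a₄) 0) {P : W.Point} {t : F} (hP : HasCuspParam φ u P t)
    (ht : t ≠ 0) {n : ℕ} (hn : 0 < n) : HasCuspParam φ u (n • P) (n * t) := by
  induction n, hn using Nat.le_induction with
  | base => simpa using hP
  | succ n hn ih =>
    rw [succ_nsmul, Nat.cast_succ, add_one_mul]
    rcases hn.eq_or_lt with rfl | hn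
    · simpa using hP.double ha₄ ht
    refine ih.add hP (mul_ne_zero (Nat.cast_ne_zero.mpr (by omega)) ht) ht fun h => ?_
    have : ((n : F) ^ 2 - 1) * t ^ 2 = 0 := by linear_combination h
    have hn2 : (n : F) ^ 2 ≠ 1 := by exact_mod_cast (Nat.one_lt_pow two_ne_zero hn).ne'
    exact mul_ne_zero (sub_ne_zero.mpr hn2) (pow_ne_zero 2 ht) this

end CuspReduction

section RatFunc

open WeierstrassCurve WeierstrassCurve.Affine

variable {𝕜 F : Type*} [Field 𝕜] [Field F] {φ : 𝕜[X] →+* F}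

theorem RatFunc.mul_algebraMap_denom (ξ : RatFunc 𝕜) :
    ξ * algebraMap 𝕜[X] (RatFunc 𝕜) ξ.denom = algebraMap 𝕜[X] (RatFunc 𝕜) ξ.num :=
  ((div_eq_iff (algebraMap_ne_zero ξ.denom_ne_zero)).mp ξ.num_div_denom).symm

theorem RatFunc.exists_hasResidue_of_mul_self {ξ : RatFunc 𝕜} {r : F}
    (h : HasResidue φ (ξ * ξ) r) : ∃ s, HasResidue φ ξ s := by
  obtain ⟨p, q, hq, he, -⟩ := h
  have hden : φ ξ.denom ≠ 0 := by
    intro hden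
    have key : ξ.num ^ 2 * q = p * ξ.denom ^ 2 := algebraMap_injective 𝕜 <| by
      simp only [map_mul, map_pow, ← mul_algebraMap_denom, ← he]
      ring
    have hnum : φ ξ.num = 0 := by simpa [hden, hq] using congrArg φ key
    obtain ⟨a, b, hab⟩ := ξ.isCoprime_num_denom
    simpa [hnum, hden] using congrArg φ hab
  exact ⟨_, ξ.num, ξ.denom, hden, mul_algebraMap_denom ξ, div_mul_cancel₀ _ hden⟩

theorem exists_hasCuspParam {W : WeierstrassCurve.Affine (RatFunc 𝕜)} [W.IsShortNF] {u : RatFunc 𝕜}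
    (ha₄ : HasResidue φ (u ^ 4 * W.a₄) 0) (ha₆ : HasResidue φ (u ^ 6 * W.a₆) 0)
    {x y : RatFunc 𝕜} (h : W.Nonsingular x y) {c : F} (hc : HasResidue φ (u ^ 2 * x) c)
    (hc0 : c ≠ 0) : ∃ t ≠ 0, HasCuspParam φ u (.some x y h) t := by
  have hy : HasResidue φ (u ^ 3 * y * (u ^ 3 * y)) (c ^ 3) := by
    have heq := (equation_iff x y).mp h.1
    simp only [a₁_of_isShortNF, a₂_of_isShortNF,
      a₃_of_isShortNF] at heq
    convert ((hc.pow 3).add (ha₄.mul hc)).add ha₆ using 1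
    · linear_combination u ^ 6 * heq
    · ring
  obtain ⟨d, hd⟩ := RatFunc.exists_hasResidue_of_mul_self hy
  have hdc : d ^ 2 = c ^ 3 := by rw [sq]; exact (hd.mul hd).unique hy
  have hd0 : d ≠ 0 := by
    rintro rfl
    exact hc0 (pow_eq_zero_iff three_ne_zero |>.mp (by simpa using hdc.symm))
  refine ⟨c / d, div_ne_zero hc0 hd0, x, y, h, rfl, ?_, ?_⟩
  · convert hc using 1
    field_simp
    linear_combination hdc
  · convert hd using 1
    field_simp
    linear_combination hdc

variable {π : 𝕜[X]} {m : ℕ} {ξ : RatFunc 𝕜}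

theorem RatFunc.exists_hasResidue_of_emultiplicity_denom (hπ : Prime π)
    (hφ : ∀ q, φ q = 0 ↔ π ∣ q) (hm : 0 < m) (h : emultiplicity π ξ.denom = m) :
    ∃ c ≠ 0, HasResidue φ (algebraMap 𝕜[X] (RatFunc 𝕜) π ^ m * ξ) c := by
  obtain ⟨⟨s, hs⟩, hndvd⟩ := emultiplicity_eq_coe.mp h
  have hπs : φ s ≠ 0 := fun hs0 => by
    obtain ⟨v, rfl⟩ := (hφ s).mp hs0
    exact hndvd ⟨v, by rw [hs]; ring⟩
  have hπnum : φ ξ.num ≠ 0 := fun hnum => hπ.not_isUnit <|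
    ξ.isCoprime_num_denom.isUnit_of_dvd' ((hφ _).mp hnum) ((dvd_pow_self π hm.ne').trans ⟨s, hs⟩)
  refine ⟨φ ξ.num / φ s, div_ne_zero hπnum hπs, ξ.num, s, hπs, ?_, div_mul_cancel₀ _ hπs⟩
  rw [← mul_algebraMap_denom, hs, map_mul, map_pow]
  ring

theorem RatFunc.emultiplicity_denom_of_hasResidue (hπ : Prime π) (hφ : ∀ q, φ q = 0 ↔ π ∣ q)
    (hm : 0 < m) {c : F}
    (h : HasResidue φ (algebraMap 𝕜[X] (RatFunc 𝕜) π ^ m * ξ) c) (hc : c ≠ 0) :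
    emultiplicity π ξ.denom = m := by
  obtain ⟨p, q, hq, he, hr⟩ := h
  have hπp : ¬π ∣ p := fun hp => mul_ne_zero hc hq (hr.trans ((hφ p).mpr hp))
  have hπq : ¬π ∣ q := mt (hφ q).mpr hq
  have key : π ^ m * ξ.num * q = p * ξ.denom := algebraMap_injective 𝕜 <| by
    simp only [map_mul, map_pow, ← mul_algebraMap_denom, ← he]
    ring
  have hmul := congrArg (emultiplicity π) key
  rw [emultiplicity_mul hπ, emultiplicity_mul hπ, emultiplicity_mul hπ,
    emultiplicity_pow_self_of_prime hπ, emultiplicity_eq_zero.mpr hπq,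
    emultiplicity_eq_zero.mpr hπp, zero_add, add_zero] at hmul
  by_cases hnum : π ∣ ξ.num
  · have hden : ¬π ∣ ξ.denom := fun hden =>
      hπ.not_isUnit (ξ.isCoprime_num_denom.isUnit_of_dvd' hnum hden)
    rw [emultiplicity_eq_zero.mpr hden, add_eq_zero, Nat.cast_eq_zero] at hmul
    omega
  · rw [emultiplicity_eq_zero.mpr hnum, add_zero] at hmul
    exact hmul.symm

end RatFunc

universe u

theorem Polynomial.exists_charZero_residueField {𝕜 : Type u} [Field 𝕜] [CharZero 𝕜] {π : 𝕜[X]}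
    (hπ : Prime π) :
    ∃ (F : Type u) (_ : Field F) (_ : CharZero F) (φ : 𝕜[X] →+* F), ∀ q, φ q = 0 ↔ π ∣ q := by
  have := PrincipalIdealRing.isMaximal_of_irreducible hπ.irreducible
  let : Field (𝕜[X] ⧸ Ideal.span {π}) := Ideal.Quotient.field _
  refine ⟨𝕜[X] ⧸ Ideal.span {π}, inferInstance,
    charZero_of_injective_algebraMap (algebraMap 𝕜 _).injective, Ideal.Quotient.mk _, fun q => ?_⟩
  rw [Ideal.Quotient.eq_zero_iff_mem, Ideal.mem_span_singleton]

instance (A B : ℚ[X]) : (curveQt A B).IsShortNF := ⟨rfl, rfl, rfl⟩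

theorem emultiplicity_denom_xCoord_nsmul [DecidableEq (RatFunc ℚ)] {A B π : ℚ[X]} (hπ : Prime π)
    {P : (curveQt A B).Point} {a : ℕ} (ha : 0 < a)
    (hP : emultiplicity π (xCoord P).denom = (2 * a : ℕ)) {k : ℕ} (hk : 0 < k) :
    emultiplicity π (xCoord (k • P)).denom = (2 * a : ℕ) := by
  obtain ⟨F, _, _, φ, hφ⟩ := exists_charZero_residueField hπ
  set u := algebraMap ℚ[X] (RatFunc ℚ) π ^ a
  have hu (n : ℕ) : u ^ n = algebraMap ℚ[X] (RatFunc ℚ) π ^ (n * a) := by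
    rw [← pow_mul, mul_comm]
  have hπ0 : φ π = 0 := (hφ π).mpr dvd_rfl
  have ha₄ : HasResidue φ (u ^ 4 * (curveQt A B).a₄) 0 := by
    rw [hu]; exact hasResidue_pow_mul_algebraMap hπ0 (by omega) A
  have ha₆ : HasResidue φ (u ^ 6 * (curveQt A B).a₆) 0 := by
    rw [hu]; exact hasResidue_pow_mul_algebraMap hπ0 (by omega) B
  rcases P with _ | ⟨x, y, h⟩
  · change emultiplicity π (0 : RatFunc ℚ).denom = _ at hP
    rw [RatFunc.denom_zero, emultiplicity_of_one_right hπ.not_isUnit] at hP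
    norm_cast at hP
    omega
  obtain ⟨c, hc0, hc⟩ := RatFunc.exists_hasResidue_of_emultiplicity_denom hπ hφ (by omega) hP
  rw [← hu] at hc
  obtain ⟨t, ht, hPt⟩ := exists_hasCuspParam ha₄ ha₆ h hc hc0
  obtain ⟨x', y', h', hkP, hx', -⟩ := hPt.nsmul ha₄ ht hk
  rw [hkP]
  refine RatFunc.emultiplicity_denom_of_hasResidue hπ hφ (by omega) ?_
    (inv_ne_zero (pow_ne_zero 2 (mul_ne_zero (Nat.cast_ne_zero.mpr hk.ne') ht)))
  rwa [← hu]

theorem dvd_and_isCoprime_div_of_emultiplicity_eq {R : Type*} [EuclideanDomain R] {a b : R}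
    (ha : a ≠ 0) (h : ∀ p, Prime p → p ∣ a → emultiplicity p b = emultiplicity p a) :
    a ∣ b ∧ IsCoprime (b / a) a := by
  have hdvd : a ∣ b := (UniqueFactorizationMonoid.dvd_iff_emultiplicity_le ha).mpr fun p hp => by
    by_cases hpa : p ∣ a
    · exact (h p hp hpa).ge
    · rw [emultiplicity_eq_zero.mpr hpa]
      exact zero_le
  obtain ⟨c, rfl⟩ := hdvd
  refine ⟨dvd_mul_right a c, ?_⟩
  rw [mul_div_cancel_left₀ _ ha]
  refine isCoprime_of_prime_dvd (fun h0 => ha h0.2) fun p hp hpc hpa => ?_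
  have hfin : emultiplicity p a ≠ ⊤ :=
    finiteMultiplicity_iff_emultiplicity_ne_top.mp (FiniteMultiplicity.of_prime_left hp ha)
  have hc : emultiplicity p c = 0 := by
    have := h p hp hpa
    rw [emultiplicity_mul hp] at this
    exact (WithTop.add_left_inj hfin).mp (this.trans (add_zero _).symm)
  exact emultiplicity_eq_zero.mp hc hpc

open Classical in
theorem canonical_factorization_general (A B : Polynomial ℚ)
    (P' : (curveQt A B).Point)
    (k : ℕ) (hk : 2 ≤ k)
    (BP' BP : Polynomial ℚ)
    (hBP' : BP'.Monic ∧ (xCoord P').denom = BP' ^ 2)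
    (hBP : BP.Monic ∧ (xCoord (k • P')).denom = BP ^ 2) :
    BP' ∣ BP ∧ IsCoprime (BP / BP') BP' := by
  refine dvd_and_isCoprime_div_of_emultiplicity_eq hBP'.1.ne_zero fun π hπ hπBP' => ?_
  have hfin {Q : ℚ[X]} (hQ : Q.Monic) : ∃ n : ℕ, emultiplicity π Q = n :=
    ⟨_, (FiniteMultiplicity.of_prime_left hπ hQ.ne_zero).emultiplicity_eq_multiplicity⟩
  obtain ⟨a, ha⟩ := hfin hBP'.1
  obtain ⟨b, hb⟩ := hfin hBP.1
  have ha0 : 0 < a := by exact_mod_cast ha ▸ emultiplicity_pos_of_dvd hπBP'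
  have hP' : emultiplicity π (xCoord P').denom = (2 * a : ℕ) := by
    rw [hBP'.2, emultiplicity_pow hπ, ha]
    norm_cast
  have hP := emultiplicity_denom_xCoord_nsmul hπ ha0 hP' (by omega : 0 < k)
  rw [hBP.2, emultiplicity_pow hπ, hb] at hP
  rw [ha, hb]
  norm_cast at hP ⊢
  omega

open Classical in
/-- Canonical factorization for a multiplication map: if `P′` is a non-torsion point on a
minimal short Weierstrass curve over `ℚ(t)`, `k ≥ 2` and `P = k•P′`, then `B_{P′}`
divides `B_P` and the quotient `B_P / B_{P′}` is coprime to `B_{P′}` in `ℚ[t]`. -/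
theorem canonical_factorization (A B : Polynomial ℚ)
    (hΔ : (-16 * (4 * A ^ 3 + 27 * B ^ 2) : Polynomial ℚ) ≠ 0)
    (hmin : MinimalQt A B)
    (P' : (curveQt A B).Point)
    (hP' : ∀ n : ℕ, 1 ≤ n → n • P' ≠ 0)
    (k : ℕ) (hk : 2 ≤ k)
    (BP' BP : Polynomial ℚ)
    (hBP' : BP'.Monic ∧ (xCoord P').denom = BP' ^ 2)
    (hBP : BP.Monic ∧ (xCoord (k • P')).denom = BP ^ 2) :
    BP' ∣ BP ∧ IsCoprime (BP / BP') BP' :=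
  canonical_factorization_general A B P' k hk BP' BP hBP' hBP
end
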